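/- Let $T > 0$, $p \geq 1$, $\delta \in (0,1)$ and $R \geq \max(\sqrt{4p|\ln \delta|}, p e^{-1})$. Let $B^{\delta,R}$ be the truncated linear Wong–Zakai approximation of a standard Brownian motion $B$ with width $\delta$ and truncation parameter $R$. Then there exists a constant $C > 0$ (depending only on $T$ and $p$) such that for all $s, t \in [0,T]$, $\|B^{\delta,R}(t) - B^{\delta,R}(s)\|_{L^p(\Omega)} \leq C \max(|t-s|^{1/2}, \delta^{1/2})$. -/

import Mathlib

open MeasureTheory ProbabilityTheory

/-- Truncation of `B` at level `R √t`. -/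
noncomputable def truncBM {Ω : Type*} (B : ℝ → Ω → ℝ) (R t : ℝ) (ω : Ω) : ℝ :=
  max (-(R * Real.sqrt t)) (min (B t ω) (R * Real.sqrt t))

/-- `⌊t⌋_δ = δ ⌊t/δ⌋`. -/
noncomputable def floorD (δ t : ℝ) : ℝ := δ * ⌊t / δ⌋

/-- Truncated piecewise-linear Wong–Zakai interpolant of `B` with width `δ`
and truncation parameter `R`. -/
noncomputable def wzApprox {Ω : Type*} (B : ℝ → Ω → ℝ) (δ R t : ℝ) (ω : Ω) : ℝ :=
  truncBM B R (floorD δ t) ω +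
    (t - floorD δ t) / δ * (truncBM B R (floorD δ t + δ) ω - truncBM B R (floorD δ t) ω)

open Real
open scoped ENNReal NNReal

/-!
Write `⌊·⌋` for `floorD δ` and `B^R` for `truncBM B R`. The increment `B^{δ,R}(t) - B^{δ,R}(s)` is
a combination, with coefficients in `[0, 1]`, of the increments of `B^R` over `[⌊s⌋, ⌊t⌋]`,
`[⌊t⌋, ⌊t⌋ + δ]` and `[⌊s⌋, ⌊s⌋ + δ]`, of lengths at most `t - s + δ`, `δ` and `δ`.

For `b ≤ a`, truncation at a fixed level is 1-Lipschitz, and lowering the level from `R√a` to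
`R√b = (√b/√a) R√a` moves the truncation of `x` by at most `(1 - √b/√a)|x|`. Hence
`|B^R(a) - B^R(b)| ≤ |B(a) - B(b)| + (1 - √b/√a)|B(a)|`, and Gaussian scaling turns this into
`‖B^R(a) - B^R(b)‖_p ≤ 2‖Z‖_p √(a - b)` for a standard normal `Z`, uniformly in `R ≥ 0`.
-/

theorem Real.sqrt_add_le_sqrt_add_sqrt {x y : ℝ} (hx : 0 ≤ x) (hy : 0 ≤ y) :
    √(x + y) ≤ √x + √y := by
  refine Real.sqrt_le_iff.2 ⟨by positivity, ?_⟩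
  nlinarith [Real.sq_sqrt hx, Real.sq_sqrt hy, Real.sqrt_nonneg x, Real.sqrt_nonneg y]

theorem abs_clamp_sub_clamp_le (A x y : ℝ) :
    |max (-A) (min x A) - max (-A) (min y A)| ≤ |x - y| := by
  refine (abs_max_sub_max_le_max _ _ _ _).trans ?_
  simpa using abs_min_sub_min_le_max x A y A

theorem abs_clamp_sub_clamp_mul_le {A θ : ℝ} (hA : 0 ≤ A) (hθ₀ : 0 ≤ θ) (hθ₁ : θ ≤ 1) (x : ℝ) :
    |max (-A) (min x A) - max (-(θ * A)) (min x (θ * A))| ≤ (1 - θ) * |x| := by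
  have hθA : θ * A ≤ A := mul_le_of_le_one_left hA hθ₁
  have : 0 ≤ θ * A := mul_nonneg hθ₀ hA
  rcases le_total 0 x with hx | hx
  · rw [abs_of_nonneg hx, max_eq_right (le_min (by linarith) (by linarith)),
      max_eq_right (le_min (by linarith) (by linarith))]
    rcases le_total x (θ * A) with h | h
    · rw [min_eq_left h, min_eq_left (h.trans hθA), sub_self, abs_zero]; nlinarith
    rw [min_eq_right h, abs_of_nonneg (by simp [h, hθA])]
    nlinarith [min_le_left x A, min_le_right x A]
  · rw [abs_of_nonpos hx, min_eq_left (hx.trans hA), min_eq_left (hx.trans this)]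
    rcases le_total (-(θ * A)) x with h | h
    · rw [max_eq_right h, max_eq_right ((neg_le_neg hθA).trans h), sub_self, abs_zero]; nlinarith
    rw [max_eq_left h, abs_sub_comm, abs_of_nonneg (by simp [h, hθA])]
    nlinarith [le_max_left (-A) x, le_max_right (-A) x]

theorem floorD_eq_sub_mul_fract {δ : ℝ} (hδ : δ ≠ 0) (t : ℝ) :
    floorD δ t = t - δ * Int.fract (t / δ) := by
  rw [floorD, Int.fract, mul_sub, mul_div_cancel₀ _ hδ]
  ring

theorem floorD_nonneg {δ t : ℝ} (hδ : 0 ≤ δ) (ht : 0 ≤ t) : 0 ≤ floorD δ t :=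
  mul_nonneg hδ (Int.cast_nonneg (Int.floor_nonneg.2 (div_nonneg ht hδ)))

theorem floorD_mono {δ : ℝ} (hδ : 0 ≤ δ) : Monotone (floorD δ) := fun _ _ hst =>
  mul_le_mul_of_nonneg_left (Int.cast_le.2 (Int.floor_mono (div_le_div_of_nonneg_right hst hδ))) hδ

theorem floorD_sub_floorD_le {δ : ℝ} (hδ : 0 < δ) (s t : ℝ) :
    floorD δ t - floorD δ s ≤ t - s + δ := by
  rw [floorD_eq_sub_mul_fract hδ.ne', floorD_eq_sub_mul_fract hδ.ne']
  nlinarith [Int.fract_nonneg (t / δ), Int.fract_lt_one (s / δ)]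

theorem eLpNorm_id_gaussianReal_ne_zero {μ : ℝ} {v : ℝ≥0} (hv : v ≠ 0) {q : ℝ≥0∞} (hq : q ≠ 0) :
    eLpNorm id q (gaussianReal μ v) ≠ 0 := by
  have := nullSingletonClass_gaussianReal (μ := μ) hv
  intro h
  rw [eLpNorm_eq_zero_iff aestronglyMeasurable_id hq] at h
  have hfalse : ∀ᵐ x ∂(gaussianReal μ v), False := by
    filter_upwards [h, (gaussianReal μ v).ae_ne 0] with x h1 h2 using h2 h1
  exact IsProbabilityMeasure.ne_zero _ (by simpa using hfalse)

theorem eLpNorm_eq_sqrt_mul_of_map_eq_gaussianReal {Ω : Type*} [MeasurableSpace Ω] {P : Measure Ω}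
    {X : Ω → ℝ} (hX : AEMeasurable X P) {v : ℝ} (hv : 0 ≤ v)
    (hlaw : P.map X = gaussianReal 0 v.toNNReal) (q : ℝ≥0∞) :
    eLpNorm X q P = ENNReal.ofReal √v * eLpNorm id q (gaussianReal 0 1) := by
  have hscale : gaussianReal 0 v.toNNReal = (gaussianReal 0 1).map (√v * ·) := by
    rw [gaussianReal_map_const_mul]
    congr 1
    · ring
    · ext; simp [Real.sq_sqrt hv, hv]
  calc eLpNorm X q P = eLpNorm id q (P.map X) :=
        (eLpNorm_map_measure aestronglyMeasurable_id hX).symm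
    _ = eLpNorm (√v • id) q (gaussianReal 0 1) := by
        rw [hlaw, hscale, eLpNorm_map_measure aestronglyMeasurable_id (by fun_prop)]; rfl
    _ = ENNReal.ofReal √v * eLpNorm id q (gaussianReal 0 1) := by
        rw [eLpNorm_const_smul, Real.enorm_of_nonneg (Real.sqrt_nonneg v)]

section WongZakai

variable {Ω : Type*} (B : ℝ → Ω → ℝ)

theorem measurable_truncBM [MeasurableSpace Ω] {t : ℝ} (hB : Measurable (B t)) (R : ℝ) :
    Measurable (truncBM B R t) :=
  measurable_const.max (hB.min measurable_const)

theorem abs_truncBM_sub_truncBM_le {R a b : ℝ} (hR : 0 ≤ R) (hba : b ≤ a) (ω : Ω) :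
    |truncBM B R a ω - truncBM B R b ω| ≤ |B a ω - B b ω| + (1 - √b / √a) * |B a ω| := by
  set θ := √b / √a
  have hsqrt : √b ≤ √a := Real.sqrt_le_sqrt hba
  have hθ₀ : 0 ≤ θ := by positivity
  have hθ₁ : θ ≤ 1 := div_le_one_of_le₀ hsqrt (Real.sqrt_nonneg a)
  have hlevel : R * √b = θ * (R * √a) := by
    rcases (Real.sqrt_nonneg a).eq_or_lt with ha | ha
    · rw [← ha, le_antisymm (ha ▸ hsqrt) (Real.sqrt_nonneg b)]; simp
    · rw [mul_left_comm, div_mul_cancel₀ _ ha.ne']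
  have hRa : 0 ≤ R * √a := by positivity
  calc |truncBM B R a ω - truncBM B R b ω|
      ≤ |truncBM B R a ω - max (-(θ * (R * √a))) (min (B a ω) (θ * (R * √a)))|
        + |max (-(θ * (R * √a))) (min (B a ω) (θ * (R * √a))) - truncBM B R b ω| :=
        abs_sub_le _ _ _
    _ ≤ (1 - θ) * |B a ω| + |B a ω - B b ω| := by
        unfold truncBM
        rw [hlevel]
        exact add_le_add (abs_clamp_sub_clamp_mul_le hRa hθ₀ hθ₁ _) (abs_clamp_sub_clamp_le _ _ _)
    _ = |B a ω - B b ω| + (1 - θ) * |B a ω| := add_comm _ _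

theorem eLpNorm_truncBM_sub_le [MeasurableSpace Ω] {P : Measure Ω}
    (hBmeas : ∀ t, Measurable (B t)) (hB0 : ∀ ω, B 0 ω = 0)
    (hBinc : ∀ s t : ℝ, 0 ≤ s → s ≤ t →
      Measure.map (fun ω => B t ω - B s ω) P = gaussianReal 0 (Real.toNNReal (t - s)))
    {q : ℝ≥0∞} (hq : 1 ≤ q) {R a b : ℝ} (hR : 0 ≤ R) (hb : 0 ≤ b) (hba : b ≤ a) :
    eLpNorm (fun ω => truncBM B R a ω - truncBM B R b ω) q P
      ≤ 2 * eLpNorm id q (gaussianReal 0 1) * ENNReal.ofReal √(a - b) := by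
  set G := eLpNorm id q (gaussianReal 0 1)
  have hincr : eLpNorm (fun ω => B a ω - B b ω) q P = ENNReal.ofReal √(a - b) * G :=
    eLpNorm_eq_sqrt_mul_of_map_eq_gaussianReal ((hBmeas a).sub (hBmeas b)).aemeasurable
      (sub_nonneg.2 hba) (hBinc b a hb hba) q
  have hBa : eLpNorm (B a) q P = ENNReal.ofReal √a * G :=
    eLpNorm_eq_sqrt_mul_of_map_eq_gaussianReal (hBmeas a).aemeasurable (hb.trans hba)
      (by simpa [hB0] using hBinc 0 a le_rfl (hb.trans hba)) q
  have hθ : ‖1 - √b / √a‖ₑ * ENNReal.ofReal √a ≤ ENNReal.ofReal √(a - b) := by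
    rcases (Real.sqrt_nonneg a).eq_or_lt with ha | ha
    · simp [← ha]
    have hsqrt : √a - √b ≤ √(a - b) := by
      simpa using Real.sqrt_add_le_sqrt_add_sqrt (sub_nonneg.2 hba) hb
    have hθ₁ : 0 ≤ 1 - √b / √a := sub_nonneg.2 (div_le_one_of_le₀ (Real.sqrt_le_sqrt hba) ha.le)
    rw [Real.enorm_of_nonneg hθ₁, ← ENNReal.ofReal_mul hθ₁, sub_mul, one_mul,
      div_mul_cancel₀ _ ha.ne']
    exact ENNReal.ofReal_le_ofReal hsqrt
  calc eLpNorm (fun ω => truncBM B R a ω - truncBM B R b ω) q P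
      ≤ eLpNorm (fun ω => ‖B a ω - B b ω‖ + (1 - √b / √a) • ‖B a ω‖) q P :=
        eLpNorm_mono_real fun ω => by
          simpa only [Real.norm_eq_abs, smul_eq_mul] using abs_truncBM_sub_truncBM_le B hR hba ω
    _ ≤ eLpNorm (fun ω => B a ω - B b ω) q P + ‖1 - √b / √a‖ₑ * eLpNorm (B a) q P := by
        have h₁ : AEStronglyMeasurable (fun ω => ‖B a ω - B b ω‖) P :=
          ((hBmeas a).sub (hBmeas b)).norm.aestronglyMeasurable
        have h₂ : AEStronglyMeasurable (fun ω => (1 - √b / √a) • ‖B a ω‖) P :=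
          ((hBmeas a).norm.const_smul (1 - √b / √a)).aestronglyMeasurable
        refine (eLpNorm_add_le h₁ h₂ hq).trans_eq ?_
        rw [eLpNorm_norm, ← eLpNorm_norm (B a), ← eLpNorm_const_smul]
        rfl
    _ = ENNReal.ofReal √(a - b) * G + (‖1 - √b / √a‖ₑ * ENNReal.ofReal √a) * G := by
        rw [hincr, hBa, mul_assoc]
    _ ≤ ENNReal.ofReal √(a - b) * G + ENNReal.ofReal √(a - b) * G := by gcongr
    _ = 2 * G * ENNReal.ofReal √(a - b) := by ring

theorem abs_wzApprox_sub_le {δ : ℝ} (hδ : 0 < δ) (R s t : ℝ) (ω : Ω) :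
    |wzApprox B δ R t ω - wzApprox B δ R s ω|
      ≤ |truncBM B R (floorD δ t) ω - truncBM B R (floorD δ s) ω|
        + |truncBM B R (floorD δ t + δ) ω - truncBM B R (floorD δ t) ω|
        + |truncBM B R (floorD δ s + δ) ω - truncBM B R (floorD δ s) ω| := by
  have hfract : ∀ r, (r - floorD δ r) / δ = Int.fract (r / δ) := fun r => by
    rw [floorD_eq_sub_mul_fract hδ.ne', sub_sub_cancel, mul_div_cancel_left₀ _ hδ.ne']
  have hshrink : ∀ r x : ℝ, |Int.fract r * x| ≤ |x| := fun r x => by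
    rw [abs_mul, abs_of_nonneg (Int.fract_nonneg r)]
    exact mul_le_of_le_one_left (abs_nonneg x) (Int.fract_lt_one r).le
  simp only [wzApprox, hfract]
  set a := truncBM B R (floorD δ t) ω
  set c := truncBM B R (floorD δ s) ω
  calc |a + Int.fract (t / δ) * (truncBM B R (floorD δ t + δ) ω - a)
        - (c + Int.fract (s / δ) * (truncBM B R (floorD δ s + δ) ω - c))|
      = |(a - c) + Int.fract (t / δ) * (truncBM B R (floorD δ t + δ) ω - a)
          + -(Int.fract (s / δ) * (truncBM B R (floorD δ s + δ) ω - c))| := by ring_nf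
    _ ≤ _ := by
        refine (abs_add_three _ _ _).trans ?_
        rw [abs_neg]
        exact add_le_add (add_le_add le_rfl (hshrink _ _)) (hshrink _ _)

theorem eLpNorm_wzApprox_sub_le [MeasurableSpace Ω] {P : Measure Ω} {q : ℝ≥0∞} (hq : 1 ≤ q)
    {δ R : ℝ} (hδ : 0 < δ) (hmeas : ∀ a, AEStronglyMeasurable (truncBM B R a) P) {K : ℝ≥0∞}
    (hinc : ∀ a b, 0 ≤ b → b ≤ a →
      eLpNorm (fun ω => truncBM B R a ω - truncBM B R b ω) q P ≤ K * ENNReal.ofReal √(a - b))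
    {s t : ℝ} (hs : 0 ≤ s) (hst : s ≤ t) :
    eLpNorm (fun ω => wzApprox B δ R t ω - wzApprox B δ R s ω) q P
      ≤ K * ENNReal.ofReal (√(t - s) + 3 * √δ) := by
  set u := floorD δ s
  set v := floorD δ t
  have hu : 0 ≤ u := floorD_nonneg hδ.le hs
  have huv : u ≤ v := floorD_mono hδ.le hst
  have hD : ∀ a b, AEStronglyMeasurable (fun ω => ‖truncBM B R a ω - truncBM B R b ω‖) P :=
    fun a b => ((hmeas a).sub (hmeas b)).norm
  have hsqrt : √(v - u) ≤ √(t - s) + √δ :=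
    (Real.sqrt_le_sqrt (floorD_sub_floorD_le hδ s t)).trans
      (Real.sqrt_add_le_sqrt_add_sqrt (sub_nonneg.2 hst) hδ.le)
  calc eLpNorm (fun ω => wzApprox B δ R t ω - wzApprox B δ R s ω) q P
      ≤ eLpNorm (fun ω => ‖truncBM B R v ω - truncBM B R u ω‖
          + ‖truncBM B R (v + δ) ω - truncBM B R v ω‖
          + ‖truncBM B R (u + δ) ω - truncBM B R u ω‖) q P :=
        eLpNorm_mono_real fun ω => by
          simpa only [Real.norm_eq_abs] using abs_wzApprox_sub_le B hδ R s t ω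
    _ ≤ eLpNorm (fun ω => truncBM B R v ω - truncBM B R u ω) q P
        + eLpNorm (fun ω => truncBM B R (v + δ) ω - truncBM B R v ω) q P
        + eLpNorm (fun ω => truncBM B R (u + δ) ω - truncBM B R u ω) q P := by
        refine (eLpNorm_add_le ((hD _ _).add (hD _ _)) (hD _ _) hq).trans ?_
        rw [eLpNorm_norm]
        gcongr
        refine (eLpNorm_add_le (hD _ _) (hD _ _) hq).trans ?_
        rw [eLpNorm_norm, eLpNorm_norm]
    _ ≤ K * ENNReal.ofReal √(v - u) + K * ENNReal.ofReal √δ + K * ENNReal.ofReal √δ := by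
        gcongr
        · exact hinc v u hu huv
        · simpa using hinc (v + δ) v (hu.trans huv) (by linarith)
        · simpa using hinc (u + δ) u hu (by linarith)
    _ ≤ K * ENNReal.ofReal (√(t - s) + 3 * √δ) := by
        rw [← mul_add, ← mul_add, ← ENNReal.ofReal_add (by positivity) (by positivity),
          ← ENNReal.ofReal_add (by positivity) (by positivity)]
        gcongr K * ENNReal.ofReal ?_
        linarith

theorem eLpNorm_wzApprox_sub_le_max [MeasurableSpace Ω] {P : Measure Ω} {q : ℝ≥0∞} (hq : 1 ≤ q)
    {δ R : ℝ} (hδ : 0 < δ) (hmeas : ∀ a, AEStronglyMeasurable (truncBM B R a) P) {K : ℝ≥0∞}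
    (hinc : ∀ a b, 0 ≤ b → b ≤ a →
      eLpNorm (fun ω => truncBM B R a ω - truncBM B R b ω) q P ≤ K * ENNReal.ofReal √(a - b))
    {s t : ℝ} (hs : 0 ≤ s) (ht : 0 ≤ t) :
    eLpNorm (fun ω => wzApprox B δ R t ω - wzApprox B δ R s ω) q P
      ≤ 4 * K * ENNReal.ofReal (max (|t - s| ^ (1/2 : ℝ)) (δ ^ (1/2 : ℝ))) := by
  wlog hst : s ≤ t generalizing s t
  · rw [abs_sub_comm]
    exact (eLpNorm_sub_comm _ _ _ _).trans_le (this ht hs (le_of_not_ge hst))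
  rw [abs_of_nonneg (sub_nonneg.2 hst), ← Real.sqrt_eq_rpow, ← Real.sqrt_eq_rpow]
  calc eLpNorm (fun ω => wzApprox B δ R t ω - wzApprox B δ R s ω) q P
      ≤ K * ENNReal.ofReal (√(t - s) + 3 * √δ) := eLpNorm_wzApprox_sub_le B hq hδ hmeas hinc hs hst
    _ ≤ K * ENNReal.ofReal (4 * max √(t - s) √δ) := by
        gcongr K * ENNReal.ofReal ?_
        linarith [le_max_left √(t - s) √δ, le_max_right √(t - s) √δ]
    _ = 4 * K * ENNReal.ofReal (max √(t - s) √δ) := by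
        rw [ENNReal.ofReal_mul zero_le_four, ENNReal.ofReal_ofNat]
        ring

end WongZakai

theorem wongZakai_truncated_Lp_holder_general
    {Ω : Type*} [MeasurableSpace Ω] (P : Measure Ω)
    (B : ℝ → Ω → ℝ) (hBmeas : ∀ t, Measurable (B t))
    (hB0 : ∀ ω, B 0 ω = 0)
    (hBinc : ∀ s t : ℝ, 0 ≤ s → s ≤ t →
      Measure.map (fun ω => B t ω - B s ω) P = gaussianReal 0 (Real.toNNReal (t - s)))
    (T p : ℝ) (hp : 1 ≤ p) :
    ∃ C > 0, ∀ δ : ℝ, 0 < δ → δ < 1 →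
      ∀ R : ℝ, max (Real.sqrt (4 * p * |Real.log δ|)) (p * Real.exp (-1)) ≤ R →
        ∀ s t : ℝ, 0 ≤ s → s ≤ T → 0 ≤ t → t ≤ T →
          eLpNorm (fun ω => wzApprox B δ R t ω - wzApprox B δ R s ω) (ENNReal.ofReal p) P
            ≤ ENNReal.ofReal (C * max (|t - s| ^ (1/2 : ℝ)) (δ ^ (1/2 : ℝ))) := by
  have hq : 1 ≤ ENNReal.ofReal p := by simpa using ENNReal.ofReal_le_ofReal hp
  set G := eLpNorm id (ENNReal.ofReal p) (gaussianReal 0 1)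
  have hG : G ≠ ⊤ := (memLp_id_gaussianReal' _ ENNReal.ofReal_ne_top).eLpNorm_ne_top
  have hG₀ : G ≠ 0 := eLpNorm_id_gaussianReal_ne_zero one_ne_zero (zero_lt_one.trans_le hq).ne'
  have hGpos : 0 < G.toReal := ENNReal.toReal_pos hG₀ hG
  refine ⟨8 * G.toReal, by positivity, fun δ hδ _ R hR s t hs _ ht _ => ?_⟩
  have hR₀ : 0 ≤ R := (Real.sqrt_nonneg _).trans ((le_max_left _ _).trans hR)
  calc eLpNorm (fun ω => wzApprox B δ R t ω - wzApprox B δ R s ω) (ENNReal.ofReal p) P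
      ≤ 4 * (2 * G) * ENNReal.ofReal (max (|t - s| ^ (1/2 : ℝ)) (δ ^ (1/2 : ℝ))) :=
        eLpNorm_wzApprox_sub_le_max B hq hδ
          (fun a => (measurable_truncBM B (hBmeas a) R).aestronglyMeasurable)
          (fun _ _ hb hba => eLpNorm_truncBM_sub_le B hBmeas hB0 hBinc hq hR₀ hb hba) hs ht
    _ = ENNReal.ofReal (8 * G.toReal * max (|t - s| ^ (1/2 : ℝ)) (δ ^ (1/2 : ℝ))) := by
        rw [ENNReal.ofReal_mul (by positivity), ENNReal.ofReal_mul (by norm_num),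
          ENNReal.ofReal_toReal hG, ENNReal.ofReal_ofNat]
        ring

/-- Hölder-type `Lᵖ(Ω)` continuity estimate for the truncated linear Wong–Zakai
approximation: `‖B^{δ,R}(t) - B^{δ,R}(s)‖_{Lᵖ(Ω)} ≤ C max(|t-s|^{1/2}, δ^{1/2})`. -/
theorem wongZakai_truncated_Lp_holder
    {Ω : Type*} [MeasurableSpace Ω] (P : Measure Ω) [IsProbabilityMeasure P]
    (B : ℝ → Ω → ℝ) (hBmeas : ∀ t, Measurable (B t))
    (hB0 : ∀ ω, B 0 ω = 0)
    (hBinc : ∀ s t : ℝ, 0 ≤ s → s ≤ t →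
      Measure.map (fun ω => B t ω - B s ω) P = gaussianReal 0 (Real.toNNReal (t - s)))
    (T p : ℝ) (hT : 0 < T) (hp : 1 ≤ p) :
    ∃ C > 0, ∀ δ : ℝ, 0 < δ → δ < 1 →
      ∀ R : ℝ, max (Real.sqrt (4 * p * |Real.log δ|)) (p * Real.exp (-1)) ≤ R →
        ∀ s t : ℝ, 0 ≤ s → s ≤ T → 0 ≤ t → t ≤ T →
          eLpNorm (fun ω => wzApprox B δ R t ω - wzApprox B δ R s ω) (ENNReal.ofReal p) P
            ≤ ENNReal.ofReal (C * max (|t - s| ^ (1/2 : ℝ)) (δ ^ (1/2 : ℝ))) :=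
  wongZakai_truncated_Lp_holder_general P B hBmeas hB0 hBinc T p hp
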